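/- arXiv:1509.07719 — 7 statements merged into one kernel-verified Lean document; each statement's English description precedes it below -/
import Mathlib

section
/- If (e_1,...,e_n) ∈ [0,1]^n is an equilibrium of the ribosome flow model on a ring with positive rates λ_1,...,λ_n, and e_i = 0 for some i, then e_j = 0 for all j. -/
/-!
An empty site makes the common flux zero. With positive rates, zero flux out of a non-empty
site forces the next site to be full, and zero flux out of a full site keeps the next one full;
so a single non-empty site would fill the whole ring, including the empty one.
-/

open Finset Set

def IsEquilibrium (n : ℕ) [NeZero n] (lam e : Fin n → ℝ) : Prop :=
  ∀ i j : Fin n, lam i * e i * (1 - e (i + 1)) = lam j * e j * (1 - e (j + 1))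

theorem Fin.forall_of_add_one_closed {n : ℕ} [NeZero n] {p : Fin n → Prop}
    (hstep : ∀ m, p m → p (m + 1)) {a : Fin n} (ha : p a) (b : Fin n) : p b := by
  open Fin.CommRing in
  have hiter : ∀ k : ℕ, p (a + k) := by
    intro k
    induction k with
    | zero => simpa using ha
    | succ k ih => simpa [add_assoc] using hstep _ ih
  open Fin.CommRing in
  simpa [Fin.cast_val_eq_self] using hiter (b - a).val

section

variable {n : ℕ} [NeZero n] {lam e : Fin n → ℝ}

theorem IsEquilibrium.flux_eq_zero (heq : IsEquilibrium n lam e) {i : Fin n} (hi : e i = 0)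
    (m : Fin n) : lam m * e m * (1 - e (m + 1)) = 0 := by
  rw [heq m i, hi]
  ring

theorem eq_one_of_flux_eq_zero {m : Fin n} (hlam : 0 < lam m)
    (hflux : lam m * e m * (1 - e (m + 1)) = 0) (hm : e m ≠ 0) : e (m + 1) = 1 := by
  rcases mul_eq_zero.mp hflux with h | h
  · exact absurd h (mul_ne_zero hlam.ne' hm)
  · linarith

end

theorem stmt0_general (n : ℕ) [NeZero n] (lam e : Fin n → ℝ)
    (hlam : ∀ i, 0 < lam i)
    (heq : IsEquilibrium n lam e) (i : Fin n) (hi : e i = 0) :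
    ∀ j, e j = 0 := by
  have hfull : ∀ m, e m ≠ 0 → e (m + 1) = 1 := fun m =>
    eq_one_of_flux_eq_zero (hlam m) (heq.flux_eq_zero hi m)
  intro j
  by_contra hj
  have hall : ∀ m, e m = 1 :=
    Fin.forall_of_add_one_closed (fun m hm => hfull m (hm ▸ one_ne_zero))
      (hfull j hj)
  linarith [hall i]

theorem stmt0 (n : ℕ) [NeZero n] (hn : 2 ≤ n) (lam e : Fin n → ℝ)
    (hlam : ∀ i, 0 < lam i) (he : ∀ i, e i ∈ Set.Icc (0:ℝ) 1)
    (heq : IsEquilibrium n lam e) (i : Fin n) (hi : e i = 0) :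
    ∀ j, e j = 0 :=
  stmt0_general n lam e hlam heq i hi
end

section
/- The only equilibrium points (λ, e) with e on the boundary of the hypercube [0,1]^n are those with e = (0,...,0) or e = (1,...,1). -/
/-!
If some `e i` is `0` or `1`, one of the equal fluxes `lam k * e k * (1 - e (k + 1))` vanishes,
hence all of them do: since `lam > 0`, every `j` has `e j = 0` or `e (j + 1) = 1`. Going around
the cycle, a single nonzero coordinate makes the next one equal to `1`, hence nonzero again, so
either all coordinates are `0` or all are `1`.
-/

open Finset Set

open Fin.NatCast in
theorem Fin.forall_of_imp_add_one {n : ℕ} [NeZero n] {p : Fin n → Prop}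
    (hstep : ∀ j, p j → p (j + 1)) {k : Fin n} (hk : p k) : ∀ j, p j := by
  have hiter : ∀ m : ℕ, p (k + m) := by
    intro m
    induction m with
    | zero => simpa using hk
    | succ m ih => simpa [Nat.cast_succ, ← add_assoc] using hstep _ ih
  intro j
  simpa [Fin.cast_val_eq_self] using hiter (j - k).val

theorem exists_flux_eq_zero_of_boundary {n : ℕ} [NeZero n] (lam e : Fin n → ℝ)
    {i : Fin n} (hi : e i = 0 ∨ e i = 1) : ∃ k, lam k * e k * (1 - e (k + 1)) = 0 := by
  rcases hi with h | h
  · exact ⟨i, by simp [h]⟩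
  · exact ⟨i - 1, by simp [h]⟩

theorem IsEquilibrium.eq_zero_or_succ_eq_one {n : ℕ} [NeZero n] {lam e : Fin n → ℝ}
    (heq : IsEquilibrium n lam e) (hlam : ∀ i, 0 < lam i)
    {k : Fin n} (hk : lam k * e k * (1 - e (k + 1)) = 0) (j : Fin n) :
    e j = 0 ∨ e (j + 1) = 1 := by
  have hj : lam j * e j * (1 - e (j + 1)) = 0 := (heq j k).trans hk
  rcases mul_eq_zero.mp hj with h | h
  · exact Or.inl ((mul_eq_zero.mp h).resolve_left (hlam j).ne')
  · exact Or.inr (sub_eq_zero.mp h).symm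

theorem Fin.forall_eq_zero_or_forall_eq_one {n : ℕ} [NeZero n] {M : Type*} [Zero M] [One M]
    [NeZero (1 : M)] {e : Fin n → M} (h : ∀ j, e j = 0 ∨ e (j + 1) = 1) : (∀ j, e j = 0) ∨ (∀ j, e j = 1) := by
  by_cases hzero : ∀ j, e j = 0
  · exact Or.inl hzero
  push Not at hzero
  obtain ⟨k, hk⟩ := hzero
  have hne : ∀ j, e j ≠ 0 :=
    Fin.forall_of_imp_add_one (fun j hj => by simp [(h j).resolve_left hj]) hk
  refine Or.inr fun j => ?_
  simpa using (h (j - 1)).resolve_left (hne _)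

theorem stmt2_general (n : ℕ) [NeZero n] (lam e : Fin n → ℝ)
    (hlam : ∀ i, 0 < lam i)
    (heq : IsEquilibrium n lam e) (hbd : ∃ i, e i = 0 ∨ e i = 1) :
    (∀ j, e j = 0) ∨ (∀ j, e j = 1) := by
  obtain ⟨i, hi⟩ := hbd
  obtain ⟨k, hk⟩ := exists_flux_eq_zero_of_boundary lam e hi
  exact Fin.forall_eq_zero_or_forall_eq_one (heq.eq_zero_or_succ_eq_one hlam hk)

theorem stmt2 (n : ℕ) [NeZero n] (hn : 2 ≤ n) (lam e : Fin n → ℝ)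
    (hlam : ∀ i, 0 < lam i) (he : ∀ i, e i ∈ Set.Icc (0:ℝ) 1)
    (heq : IsEquilibrium n lam e) (hbd : ∃ i, e i = 0 ∨ e i = 1) :
    (∀ j, e j = 0) ∨ (∀ j, e j = 1) :=
  stmt2_general n lam e hlam heq hbd
end

section
/- For λ = (1,1,...,1): if e ∈ [0,1]^n satisfies e_n(1-e_1) = e_1(1-e_2) = ... = e_{n-1}(1-e_n) and e_1 = 1/2, then e_i = 1/2 for all i. -/
open Finset Set
open Fin.NatCast Fin.CommRing

theorem stmt9 (n : ℕ) [NeZero n] (hn : 2 ≤ n) (e : Fin n → ℝ)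
    (he : ∀ i, e i ∈ Set.Icc (0:ℝ) 1)
    (heq : IsEquilibrium n (fun _ => 1) e) (h1 : e 0 = 1/2) :
    ∀ i, e i = 1/2 := by
  set E : ℕ → ℝ := fun k => e (k : Fin n) with hEdef
  have hE0 : E 0 = e 0 := by simp [hEdef]
  have hE1 : E 1 = e 1 := by simp [hEdef]
  have keyN : ∀ k : ℕ, E k * (1 - E (k+1)) = e 0 * (1 - e 1) := by
    intro k
    have h := heq (k : Fin n) 0
    have h01 : (0:Fin n) + 1 = 1 := zero_add 1
    have hcadd : ((k+1 : ℕ) : Fin n) = (k : Fin n) + 1 := by push_cast; ring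
    simp only [one_mul] at h
    rw [h01] at h
    simpa [hEdef, hcadd] using h
  have hEn : E n = 1/2 := by
    simp [hEdef, Fin.natCast_self, h1]
  have hpos : ∀ k : ℕ, 0 ≤ E k ∧ E k ≤ 1 := fun k => ⟨(he _).1, (he _).2⟩
  have h1half : e 1 = 1/2 := by
    rcases lt_trichotomy (e 1) (1/2) with hlt | heqh | hgt
    · -- e 1 < 1/2
      have hc : 0 < e 0 * (1 - e 1) := by rw [h1]; nlinarith
      have hne : ∀ k : ℕ, 0 < E k := by
        intro k
        rcases (hpos k).1.lt_or_eq with h | h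
        · exact h
        · exfalso; have hk := keyN k; rw [← h] at hk; nlinarith
      have inv : ∀ k : ℕ, 1 ≤ k → E k ≤ e 1 ∧ E k * (1 - E k) ≤ e 0 * (1 - e 1) := by
        intro k hk
        induction k, hk using Nat.le_induction with
        | base =>
          refine ⟨le_of_eq hE1, ?_⟩
          rw [hE1, h1]; nlinarith [(he 1).1]
        | succ k hk ih =>
          obtain ⟨ih1, ih2⟩ := ih
          have hk0 := hne k
          have hkey := keyN k
          have hfrac : 1 - E (k+1) = (e 0 * (1 - e 1)) / E k := by
            rw [eq_div_iff hk0.ne']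
            linear_combination hkey
          have hstep : E (k+1) ≤ E k := by
            have h2 : 1 - E k ≤ (e 0 * (1 - e 1)) / E k := by
              rw [le_div_iff₀ hk0]; nlinarith
            linarith [hfrac.le, h2]
          refine ⟨le_trans hstep ih1, ?_⟩
          have hfracpos : 0 < (e 0 * (1 - e 1)) / E k := div_pos hc hk0
          calc E (k+1) * (1 - E (k+1)) = E (k+1) * ((e 0 * (1 - e 1)) / E k) := by rw [hfrac]
            _ ≤ E k * ((e 0 * (1 - e 1)) / E k) := by nlinarith
            _ = e 0 * (1 - e 1) := by field_simp
      have hfin := (inv n (by omega)).1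
      rw [hEn] at hfin; linarith
    · exact heqh
    · -- e 1 > 1/2
      have hc : 0 ≤ e 0 * (1 - e 1) := by rw [h1]; nlinarith [(he 1).2]
      have inv : ∀ k : ℕ, 1 ≤ k → e 1 ≤ E k ∧ e 0 * (1 - e 1) ≤ E k * (1 - E k) := by
        intro k hk
        induction k, hk using Nat.le_induction with
        | base =>
          refine ⟨le_of_eq hE1.symm, ?_⟩
          rw [hE1, h1]; nlinarith [(he 1).2]
        | succ k hk ih =>
          obtain ⟨ih1, ih2⟩ := ih
          have hk0 : 0 < E k := by linarith
          have hkey := keyN k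
          have hfrac : 1 - E (k+1) = (e 0 * (1 - e 1)) / E k := by
            rw [eq_div_iff hk0.ne']
            linear_combination hkey
          have hstep : E k ≤ E (k+1) := by
            have h2 : (e 0 * (1 - e 1)) / E k ≤ 1 - E k := by
              rw [div_le_iff₀ hk0]; nlinarith
            linarith [hfrac.le, h2]
          refine ⟨le_trans ih1 hstep, ?_⟩
          have hfracpos : 0 ≤ (e 0 * (1 - e 1)) / E k := div_nonneg hc hk0.le
          calc e 0 * (1 - e 1) = E k * ((e 0 * (1 - e 1)) / E k) := by field_simp
            _ ≤ E (k+1) * ((e 0 * (1 - e 1)) / E k) := by nlinarith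
            _ = E (k+1) * (1 - E (k+1)) := by rw [hfrac]
      have hfin := (inv n (by omega)).1
      rw [hEn] at hfin; linarith
  have hall : ∀ k : ℕ, E k = 1/2 := by
    intro k
    induction k with
    | zero => rw [hE0, h1]
    | succ k ih =>
      have hk := keyN k
      rw [ih, h1, h1half] at hk
      linarith
  intro i
  have hi := hall (i : ℕ)
  simpa [hEdef, Fin.cast_val_eq_self] using hi
end

section
/- For λ, λ' ∈ (ℝ_{>0})^n, if there exists an equilibrium point e ∈ (0,1)^n common to both parameter vectors (i.e., e satisfies the equilibrium equations for both λ and λ'), then λ and λ' are collinear: λ' = c·λ for some c > 0. Conversely, collinear parameter vectors have identical equilibrium sets. -/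
open Finset Set

theorem stmt11 (n : ℕ) [NeZero n] (hn : 2 ≤ n) (lam lam' : Fin n → ℝ)
    (hlam : ∀ i, 0 < lam i) (hlam' : ∀ i, 0 < lam' i) :
    ((∃ e : Fin n → ℝ, (∀ i, e i ∈ Set.Ioo (0:ℝ) 1) ∧
        IsEquilibrium n lam e ∧ IsEquilibrium n lam' e)
      → ∃ c : ℝ, 0 < c ∧ lam' = c • lam)
    ∧ ((∃ c : ℝ, 0 < c ∧ lam' = c • lam)
      → ∀ e : Fin n → ℝ, IsEquilibrium n lam e ↔ IsEquilibrium n lam' e) := by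
  constructor
  · rintro ⟨e, he, h1, h2⟩
    have hf : ∀ i : Fin n, 0 < e i * (1 - e (i + 1)) := fun i =>
      mul_pos (he i).1 (by linarith [(he (i+1)).2])
    refine ⟨lam' 0 / lam 0, div_pos (hlam' 0) (hlam 0), ?_⟩
    funext i
    have H1 := h1 i 0
    have H2 := h2 i 0
    have key : (lam' i * lam 0) * ((e i * (1 - e (i + 1))) * (e 0 * (1 - e (0 + 1))))
        = (lam' 0 * lam i) * ((e i * (1 - e (i + 1))) * (e 0 * (1 - e (0 + 1)))) := by
      linear_combination (lam 0 * (e 0 * (1 - e (0+1)))) * H2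
        - (lam' 0 * (e 0 * (1 - e (0+1)))) * H1
    have key' : lam' i * lam 0 = lam' 0 * lam i :=
      mul_right_cancel₀ (mul_ne_zero (hf i).ne' (hf 0).ne') key
    simp only [Pi.smul_apply, smul_eq_mul]
    rw [div_mul_eq_mul_div, eq_div_iff (hlam 0).ne']
    linear_combination key'
  · rintro ⟨c, hc, rfl⟩ e
    constructor
    · intro h i j
      simp only [Pi.smul_apply, smul_eq_mul]
      linear_combination c * h i j
    · intro h i j
      have := h i j
      simp only [Pi.smul_apply, smul_eq_mul] at this
      have h' : c * (lam i * e i * (1 - e (i + 1))) = c * (lam j * e j * (1 - e (j + 1))) := by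
        linear_combination this
      exact mul_left_cancel₀ hc.ne' h'
end

section
/- For λ = (1,...,1) and any s ∈ (0,n), the intersection of the equilibrium set {e ∈ [0,1]^n : e_n(1-e_1) = e_1(1-e_2) = ... = e_{n-1}(1-e_n)} with the hyperplane {e : Σ_i e_i = s} is exactly the singleton {(s/n, ..., s/n)}. -/
open Finset Set

/-!
For equal rates the equilibrium condition says that `e i * (1 - e (i + 1))` is a constant `c`
around the cycle. If some `e i = 1` then `c = 0`, and a coordinate `≠ 1` would force its
predecessor to be `0`, so by going backwards around the cycle every coordinate is `1`.
Otherwise the maximum `M` of `e` is `< 1`, and comparing the conditions at `j` and `j + 1` shows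
that the predecessor of a maximal coordinate is maximal, so again `e` is constant.
-/

open Fin.NatCast in
theorem Fin.forall_of_add_one_imp {n : ℕ} [NeZero n] {P : Fin n → Prop}
    (hP : ∀ j, P (j + 1) → P j) {i : Fin n} (hi : P i) (j : Fin n) : P j := by
  have hsub : ∀ k : ℕ, P (i - k) := by
    intro k
    induction k with
    | zero => simpa using hi
    | succ k ih => exact hP _ (by rwa [Nat.cast_succ, sub_add_eq_sub_sub, sub_add_cancel])
  simpa using hsub (i - j).val

section Equilibrium

variable {n : ℕ} [NeZero n] {e : Fin n → ℝ}

theorem isEquilibrium_one_iff :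
    IsEquilibrium n (fun _ => 1) e ↔ ∀ i j, e i * (1 - e (i + 1)) = e j * (1 - e (j + 1)) := by
  simp only [IsEquilibrium, one_mul]

theorem IsEquilibrium.forall_eq_one (he : IsEquilibrium n (fun _ => 1) e) {i : Fin n}
    (hi : e i = 1) (j : Fin n) : e j = 1 := by
  have hzero : ∀ j, e j * (1 - e (j + 1)) = 0 := fun j => by
    simpa [hi] using isEquilibrium_one_iff.mp he j (i - 1)
  by_contra hj
  have hne : ∀ j, e j ≠ 1 := Fin.forall_of_add_one_imp (fun j hj1 => by
    have h1 : 1 - e (j + 1) ≠ 0 := sub_ne_zero.mpr (Ne.symm hj1)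
    simp [(mul_eq_zero.mp (hzero j)).resolve_right h1]) hj
  exact hne i hi

theorem IsEquilibrium.forall_eq_of_forall_le_of_lt_one (he : IsEquilibrium n (fun _ => 1) e)
    (hnonneg : ∀ j, 0 ≤ e j) {i : Fin n} (hmax : ∀ j, e j ≤ e i) (hlt : e i < 1) (j : Fin n) :
    e j = e i := by
  refine Fin.forall_of_add_one_imp (P := fun j => e j = e i) (fun j hj => ?_) rfl j
  have hcond := isEquilibrium_one_iff.mp he j (j + 1)
  rw [hj] at hcond
  -- `e j * (1 - M) = M * (1 - e (j + 2)) ≥ M * (1 - M)`, and `1 - M > 0`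
  nlinarith [hmax j, hmax (j + 1 + 1), hnonneg i]

theorem IsEquilibrium.exists_eq_const (he : IsEquilibrium n (fun _ => 1) e)
    (hbox : ∀ j, e j ∈ Icc (0 : ℝ) 1) : ∃ a, e = fun _ => a := by
  obtain ⟨i, -, hmax⟩ := exists_max_image univ e univ_nonempty
  refine ⟨e i, funext fun j => ?_⟩
  rcases (hbox i).2.lt_or_eq with hlt | heq
  · exact he.forall_eq_of_forall_le_of_lt_one (fun j => (hbox j).1) (fun j => hmax j (mem_univ j)) hlt j
  · rw [heq, he.forall_eq_one heq j]

end Equilibrium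

theorem stmt15_general (n : ℕ) [NeZero n] (s : ℝ) (hs : s ∈ Set.Ioo (0:ℝ) (n:ℝ))
    (e : Fin n → ℝ) :
    ((∀ i, e i ∈ Set.Icc (0:ℝ) 1) ∧ IsEquilibrium n (fun _ => 1) e ∧ ∑ i, e i = s)
      ↔ e = fun _ => s / n := by
  have hn : (0 : ℝ) < n := Nat.cast_pos.mpr (NeZero.pos n)
  constructor
  · rintro ⟨hbox, he, hsum⟩
    obtain ⟨a, rfl⟩ := he.exists_eq_const hbox
    simp only [sum_const, card_univ, Fintype.card_fin, nsmul_eq_mul] at hsum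
    rw [← hsum, mul_div_cancel_left₀ a hn.ne']
  · rintro rfl
    refine ⟨fun _ => ⟨div_nonneg hs.1.le hn.le, (div_le_one hn).mpr hs.2.le⟩, fun _ _ => rfl, ?_⟩
    simp only [sum_const, card_univ, Fintype.card_fin, nsmul_eq_mul]
    field_simp

theorem stmt15 (n : ℕ) [NeZero n] (hn : 2 ≤ n) (s : ℝ) (hs : s ∈ Set.Ioo (0:ℝ) (n:ℝ))
    (e : Fin n → ℝ) :
    ((∀ i, e i ∈ Set.Icc (0:ℝ) 1) ∧ IsEquilibrium n (fun _ => 1) e ∧ ∑ i, e i = s)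
      ↔ e = fun _ => s / n :=
  stmt15_general n s hs e
end

section
/- Suppose e ∈ (0,1)^n satisfies the equal-rates equilibrium equations e_n(1-e_1) = e_1(1-e_2) = ... = e_{n-1}(1-e_n). If e_1 = 1/2 and e_n > 1/2, then e_{n-1} > e_n, and by induction the sequence e_2 > e_3 > ... > e_n while also e_2 = 1 - e_n, yielding a contradiction; hence e_n ≤ 1/2. Formally: the assumptions e_1 = 1/2 and e_n > 1/2 are contradictory. -/
open Finset Set

theorem stmt16 (n : ℕ) [NeZero n] (hn : 3 ≤ n) (e : Fin n → ℝ)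
    (he : ∀ i, e i ∈ Set.Ioo (0:ℝ) 1)
    (heq : IsEquilibrium n (fun _ => 1) e)
    (h1 : e 0 = 1/2) (h2 : 1/2 < e (0 - 1)) : False := by
  have key : ∀ i : Fin n, e (i + 1) < e i := by
    intro i
    have h := heq i (0 - 1)
    simp only [one_mul, sub_add_cancel] at h
    rw [h1] at h
    have hi := he i
    have hi1 := he (i + 1)
    nlinarith [sq_nonneg (e i - 1/2), hi.1, hi.2, hi1.1, hi1.2, h2]
  obtain ⟨i0, -, hmin⟩ := Finset.exists_min_image Finset.univ e ⟨0, Finset.mem_univ 0⟩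
  exact absurd (key i0) (not_lt.2 (hmin (i0 + 1) (Finset.mem_univ _)))
end

section
/- For n ≥ 2 and λ ∈ (ℝ_{>0})^n, if e, e' ∈ [0,1]^n are both equilibria with Σ_i e_i = Σ_i e'_i = s for some s ∈ (0,n), and both lie in (0,1)^n, then intersecting with any fixed λ the equilibrium point in the hyperplane Σ e_i = s is unique: e = e'. (Uniqueness of the equilibrium on each level set of the first integral.) -/
open Finset Set

/-!
All the fluxes `λ_i e_i (1 - e_{i+1})` of an equilibrium share one value `c`. Compare two
equilibria with `c ≤ c'`: if `e'_i < e_i`, then `λ_i e'_i (1 - e'_{i+1}) ≥ λ_i e_i (1 - e_{i+1})`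
forces `e'_{i+1} < e_{i+1}`. Going once around the cycle gives `e' < e` everywhere, contradicting
`Σ e = Σ e'`; hence `e ≤ e'`, and equal sums give `e = e'`.
-/

open Fin.NatCast in
theorem Fin.forall_of_imp_add_one_s19 {n : ℕ} [NeZero n] {p : Fin n → Prop}
    (hp : ∀ i, p i → p (i + 1)) {i : Fin n} (hi : p i) (j : Fin n) : p j := by
  have hiter : ∀ k : ℕ, p (i + k) := by
    intro k
    induction k with
    | zero => simpa using hi
    | succ k ih => simpa [add_assoc] using hp _ ih
  simpa using hiter (j - i).val

theorem lt_of_mul_one_sub_le_mul_one_sub {l a b x y : ℝ} (hl : 0 < l) (hb : 0 ≤ b) (hba : b < a)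
    (hy : y < 1) (h : l * a * (1 - x) ≤ l * b * (1 - y)) : y < x := by
  by_contra! hxy
  have hla : 0 ≤ l * a := mul_nonneg hl.le (hb.trans hba.le)
  have : l * b * (1 - y) < l * a * (1 - x) :=
    calc l * b * (1 - y) < l * a * (1 - y) := by gcongr
      _ ≤ l * a * (1 - x) := by gcongr
  linarith

section Equilibrium

variable {n : ℕ} [NeZero n] {lam e e' : Fin n → ℝ}

theorem IsEquilibrium.eq_of_flux_le (hlam : ∀ i, 0 < lam i) (he' : ∀ i, e' i ∈ Set.Ico (0 : ℝ) 1)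
    (heq : IsEquilibrium n lam e) (heq' : IsEquilibrium n lam e') (hsum : ∑ i, e i = ∑ i, e' i)
    (hflux : lam 0 * e 0 * (1 - e (0 + 1)) ≤ lam 0 * e' 0 * (1 - e' (0 + 1))) : e = e' := by
  have hle : ∀ i, e i ≤ e' i := by
    intro i
    by_contra! hi
    have hstep : ∀ j, e' j < e j → e' (j + 1) < e (j + 1) := fun j hj =>
      lt_of_mul_one_sub_le_mul_one_sub (hlam j) (he' j).1 hj (he' (j + 1)).2
        (by rw [heq j 0, heq' j 0]; exact hflux)
    have hlt : ∑ j, e' j < ∑ j, e j :=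
      Finset.sum_lt_sum_of_nonempty Finset.univ_nonempty
        fun j _ => Fin.forall_of_imp_add_one_s19 hstep hi j
    linarith
  exact funext ((Finset.sum_eq_sum_iff_of_le fun i _ => hle i).1 hsum · (Finset.mem_univ _))

theorem IsEquilibrium.eq_of_sum_eq (hlam : ∀ i, 0 < lam i)
    (he : ∀ i, e i ∈ Set.Ico (0 : ℝ) 1) (he' : ∀ i, e' i ∈ Set.Ico (0 : ℝ) 1)
    (heq : IsEquilibrium n lam e) (heq' : IsEquilibrium n lam e')
    (hsum : ∑ i, e i = ∑ i, e' i) : e = e' := by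
  rcases le_total (lam 0 * e 0 * (1 - e (0 + 1))) (lam 0 * e' 0 * (1 - e' (0 + 1))) with h | h
  · exact heq.eq_of_flux_le hlam he' heq' hsum h
  · exact (heq'.eq_of_flux_le hlam he heq hsum.symm h).symm

end Equilibrium

theorem stmt19_general (n : ℕ) [NeZero n] (lam : Fin n → ℝ) (hlam : ∀ i, 0 < lam i)
    (s : ℝ) (e e' : Fin n → ℝ)
    (he : ∀ i, e i ∈ Set.Ioo (0:ℝ) 1) (he' : ∀ i, e' i ∈ Set.Ioo (0:ℝ) 1)
    (heq : IsEquilibrium n lam e) (heq' : IsEquilibrium n lam e')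
    (h1 : ∑ i, e i = s) (h2 : ∑ i, e' i = s) : e = e' :=
  heq.eq_of_sum_eq hlam (fun i => Set.Ioo_subset_Ico_self (he i))
    (fun i => Set.Ioo_subset_Ico_self (he' i)) heq' (h1.trans h2.symm)

theorem stmt19 (n : ℕ) [NeZero n] (hn : 2 ≤ n) (lam : Fin n → ℝ) (hlam : ∀ i, 0 < lam i)
    (s : ℝ) (hs : s ∈ Set.Ioo (0:ℝ) (n:ℝ)) (e e' : Fin n → ℝ)
    (he : ∀ i, e i ∈ Set.Ioo (0:ℝ) 1) (he' : ∀ i, e' i ∈ Set.Ioo (0:ℝ) 1)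
    (heq : IsEquilibrium n lam e) (heq' : IsEquilibrium n lam e')
    (h1 : ∑ i, e i = s) (h2 : ∑ i, e' i = s) : e = e' :=
  stmt19_general n lam hlam s e e' he he' heq heq' h1 h2
end
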